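/- Let θ ∈ (0,π). The optimized witness W_I(θ) − 2P has the spanning property: the set of product vectors {x⊗y : x,y : Fin 4 → ℂ, ⟨x⊗y, (W_I(θ) − 2P)(x⊗y)⟩ = 0} spans all of ℂ¹⁶ (its ℂ-linear span has dimension 16). -/

import Mathlib

open Matrix Complex Real

/-- The tensor (product) vector `x ⊗ y` in `ℂ¹⁶`. -/
noncomputable def tensorVec (x y : Fin 4 → ℂ) : Fin 4 × Fin 4 → ℂ :=
  fun p => x p.1 * y p.2

/-- The expectation `⟨v, W v⟩ = ∑ i, conj (v i) * (W *ᵥ v) i`. -/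
noncomputable def expec (W : Matrix (Fin 4 × Fin 4) (Fin 4 × Fin 4) ℂ)
    (v : Fin 4 × Fin 4 → ℂ) : ℂ :=
  ∑ i, star (v i) * W.mulVec v i

/-- The Bell-diagonal matrix `W[a,b,c,d]` with `(α₀,α₁,α₂,α₃) = (a,b,c,d)`:
`W((k,m),(k',m')) = α_{(m−k) mod 4}` if `k=k', m=m'`; `−1` if `k=m, k'=m', k≠k'`;
`0` otherwise. -/
noncomputable def Wabcd (a b c d : ℝ) : Matrix (Fin 4 × Fin 4) (Fin 4 × Fin 4) ℂ :=
  fun p q =>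
    if p.1 = q.1 ∧ p.2 = q.2 then ((![a, b, c, d] (p.2 - p.1) : ℝ) : ℂ)
    else if p.1 = p.2 ∧ q.1 = q.2 ∧ p.1 ≠ q.1 then -1
    else 0

/-- The class-I witness `W_I(θ)`. -/
noncomputable def WI (θ : ℝ) : Matrix (Fin 4 × Fin 4) (Fin 4 × Fin 4) ℂ :=
  Wabcd ((2 - Real.sin θ) / 2) ((1 + Real.cos θ) / 2)
        (2 - (2 - Real.sin θ) / 2) (1 - (1 + Real.cos θ) / 2)

/-- The class-II witness `W_II(θ)`. -/
noncomputable def WII (θ : ℝ) : Matrix (Fin 4 × Fin 4) (Fin 4 × Fin 4) ℂ :=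
  Wabcd ((1 + Real.cos θ) / 2) ((2 - Real.sin θ) / 2)
        (1 - (1 + Real.cos θ) / 2) (2 - (2 - Real.sin θ) / 2)

/-- The maximally entangled vector `Ψ(j,j') = (−1)^{j+1}/2` if `j = j'`, else `0`. -/
noncomputable def PsiVec : Fin 4 × Fin 4 → ℂ :=
  fun p => if p.1 = p.2 then ((-1 : ℂ) ^ ((p.1 : ℕ) + 1)) / 2 else 0

/-- The rank-one projector `P = |Ψ⟩⟨Ψ|`. -/
noncomputable def Pmat : Matrix (Fin 4 × Fin 4) (Fin 4 × Fin 4) ℂ :=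
  fun u v => PsiVec u * star (PsiVec v)

/-!
For a product vector supported on two indices, `x = e k + u • e k'` and `y = e k + v • e k'`,
the expectation of `W[a,b,c,d] - 2P` is an explicit quadratic form in `u` and `v`. For `W_I(θ)`
it vanishes on whole circles: for `k' = k + 1` at `(u, v) = (r c, r⁻¹ c̄)` with `|c| = 1` and
`r² = (1 + cos θ) / sin θ`, the equality case of `b r⁻² + d r² ≥ 2 √(b d) = sin θ`; for
`k' = k + 2` at `(u, v) = (c, c̄)`, because `a + c = 2`. Taking `c = 1, -1, i` separates the three
components `e (k,k) + e (k',k')`, `e (k,k')` and `e (k',k)` of `x ⊗ y`. This gives every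
off-diagonal unit vector, and the diagonal ones follow because the pairs `{k, k+1}`, `{k, k+2}`
contain a triangle, so the sums `e (k,k) + e (k',k')` along its edges can be solved for each term.
-/

lemma mem_of_forall_unit_mem {V : Type*} [AddCommGroup V] [Module ℂ V] {M : Submodule ℂ V}
    {D e f : V} {r : ℂ} (hr : r ≠ 0)
    (h : ∀ c : ℂ, star c * c = 1 → D + (r⁻¹ * star c) • e + (r * c) • f ∈ M) :
    D ∈ M ∧ e ∈ M ∧ f ∈ M := by
  have h₁ := h 1 (by simp)
  have h₂ := h (-1) (by simp)
  have h₃ := h I (by simp)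
  simp only [star_one, star_neg, Complex.star_def, Complex.conj_I] at h₁ h₂ h₃
  have hD : D ∈ M := by
    convert M.smul_mem (2 : ℂ)⁻¹ (M.add_mem h₁ h₂) using 1
    module
  have hplus : r⁻¹ • e + r • f ∈ M := by
    convert M.smul_mem (2 : ℂ)⁻¹ (M.sub_mem h₁ h₂) using 1
    module
  have hminus : r⁻¹ • e - r • f ∈ M := by
    convert M.smul_mem I (M.sub_mem h₃ hD) using 1
    match_scalars <;> ring_nf <;> simp [I_sq]
  refine ⟨hD, ?_, ?_⟩
  · convert M.smul_mem (r / 2) (M.add_mem hplus hminus) using 1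
    match_scalars <;> field_simp <;> ring
  · convert M.smul_mem (2 * r)⁻¹ (M.sub_mem hplus hminus) using 1
    match_scalars <;> field_simp <;> ring

lemma tensorVec_single_add_single {k k' : Fin 4} (h : k ≠ k') (u v : ℂ) :
    tensorVec (Pi.single k 1 + Pi.single k' u) (Pi.single k 1 + Pi.single k' v) =
      Pi.single (k, k) 1 + Pi.single (k', k') (u * v) + v • Pi.single (k, k') 1
        + u • Pi.single (k', k) 1 := by
  ext ⟨i, j⟩
  simp only [tensorVec, Pi.add_apply, Pi.smul_apply, Pi.single_apply, Prod.mk.injEq, smul_eq_mul]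
  by_cases hi : i = k <;> by_cases hj : j = k <;> by_cases hi' : i = k' <;> by_cases hj' : j = k' <;>
    simp_all

lemma expec_Wabcd_sub_Pmat_adjacent (a b c d : ℝ) (k : Fin 4) (u v : ℂ) :
    expec (Wabcd a b c d - (2 : ℂ) • Pmat)
      (tensorVec (Pi.single k 1 + Pi.single (k + 1) u) (Pi.single k 1 + Pi.single (k + 1) v)) =
      (a - 1 / 2) * (1 + star (u * v) * (u * v)) + b * (star v * v) + d * (star u * u)
        - (u * v + star (u * v)) / 2 := by
  fin_cases k <;>
  simp [expec, Wabcd, Pmat, PsiVec, tensorVec, Matrix.mulVec, dotProduct, Pi.single_apply,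
    Fintype.sum_prod_type, Fin.sum_univ_four, map_ofNat] <;> ring

lemma expec_Wabcd_sub_Pmat_opposite (a b c d : ℝ) (k : Fin 4) (u v : ℂ) :
    expec (Wabcd a b c d - (2 : ℂ) • Pmat)
      (tensorVec (Pi.single k 1 + Pi.single (k + 2) u) (Pi.single k 1 + Pi.single (k + 2) v)) =
      (a - 1 / 2) * (1 + star (u * v) * (u * v)) + c * (star u * u + star v * v)
        - 3 * (u * v + star (u * v)) / 2 := by
  fin_cases k <;>
  simp [expec, Wabcd, Pmat, PsiVec, tensorVec, Matrix.mulVec, dotProduct, Pi.single_apply,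
    Fintype.sum_prod_type, Fin.sum_univ_four, map_ofNat] <;> ring

lemma expec_WI_sub_Pmat_adjacent_eq_zero {θ r : ℝ} (hr0 : r ≠ 0)
    (hr : r ^ 2 = (1 + Real.cos θ) / Real.sin θ) (k : Fin 4) {c : ℂ} (hc : star c * c = 1) :
    expec (WI θ - (2 : ℂ) • Pmat)
      (tensorVec (Pi.single k 1 + Pi.single (k + 1) (r * c))
        (Pi.single k 1 + Pi.single (k + 1) ((r : ℂ)⁻¹ * star c))) = 0 := by
  obtain ⟨hcos, hsin⟩ := div_ne_zero_iff.1 (hr ▸ pow_ne_zero 2 hr0)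
  have hr0' : (r : ℂ) ≠ 0 := ofReal_ne_zero.2 hr0
  have huv : (r : ℂ) * c * ((r : ℂ)⁻¹ * star c) = 1 := by
    rw [← hc]; field_simp
  have hu : star ((r : ℂ) * c) * (r * c) = ((r ^ 2 : ℝ) : ℂ) := by
    rw [star_mul', show star (r : ℂ) = r from conj_ofReal r]
    push_cast
    linear_combination (r : ℂ) ^ 2 * hc
  have hv : star ((r : ℂ)⁻¹ * star c) * ((r : ℂ)⁻¹ * star c) = (((r ^ 2)⁻¹ : ℝ) : ℂ) := by
    rw [star_mul', star_inv₀, star_star, show star (r : ℂ) = r from conj_ofReal r]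
    push_cast
    linear_combination ((r : ℂ) ^ 2)⁻¹ * hc
  have key : ((2 - Real.sin θ) / 2 - 1 / 2) * 2 + (1 + Real.cos θ) / 2 * (r ^ 2)⁻¹
      + (1 - (1 + Real.cos θ) / 2) * r ^ 2 - 1 = 0 := by
    rw [hr]; field_simp; linear_combination -Real.sin_sq_add_cos_sq θ
  rw [WI, expec_Wabcd_sub_Pmat_adjacent, huv, hu, hv, star_one]
  have key' := congrArg (fun x : ℝ => (x : ℂ)) key
  push_cast at key' ⊢
  linear_combination key'

lemma expec_WI_sub_Pmat_opposite_eq_zero (θ : ℝ) (k : Fin 4) {c : ℂ} (hc : star c * c = 1) :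
    expec (WI θ - (2 : ℂ) • Pmat)
      (tensorVec (Pi.single k 1 + Pi.single (k + 2) c)
        (Pi.single k 1 + Pi.single (k + 2) (star c))) = 0 := by
  rw [WI, expec_Wabcd_sub_Pmat_opposite, star_mul', star_star, mul_comm c, hc]
  push_cast
  ring

lemma pair_mem_of_forall_unit {M : Submodule ℂ (Fin 4 × Fin 4 → ℂ)} {k k' : Fin 4}
    (hk : k ≠ k') {r : ℂ} (hr : r ≠ 0)
    (h : ∀ c : ℂ, star c * c = 1 →
      tensorVec (Pi.single k 1 + Pi.single k' (r * c))
        (Pi.single k 1 + Pi.single k' (r⁻¹ * star c)) ∈ M) :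
    Pi.single (k, k) 1 + Pi.single (k', k') 1 ∈ M ∧ Pi.single (k, k') 1 ∈ M ∧
      Pi.single (k', k) 1 ∈ M := by
  refine mem_of_forall_unit_mem hr fun c hc => ?_
  have huv : r * c * (r⁻¹ * star c) = 1 := by rw [← hc]; field_simp
  simpa only [tensorVec_single_add_single hk, huv] using h c hc

lemma single_mem_of_forall_unit {M : Submodule ℂ (Fin 4 × Fin 4 → ℂ)} {r : ℂ} (hr : r ≠ 0)
    (hadj : ∀ (k : Fin 4) (c : ℂ), star c * c = 1 →
      tensorVec (Pi.single k 1 + Pi.single (k + 1) (r * c))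
        (Pi.single k 1 + Pi.single (k + 1) (r⁻¹ * star c)) ∈ M)
    (hopp : ∀ (k : Fin 4) (c : ℂ), star c * c = 1 →
      tensorVec (Pi.single k 1 + Pi.single (k + 2) c)
        (Pi.single k 1 + Pi.single (k + 2) (star c)) ∈ M)
    (p : Fin 4 × Fin 4) : Pi.single p 1 ∈ M := by
  have adj (k : Fin 4) := pair_mem_of_forall_unit (by grind) hr (hadj k)
  have opp (k : Fin 4) := pair_mem_of_forall_unit (show k ≠ k + 2 by grind) one_ne_zero
    (by simpa only [one_mul, inv_one] using hopp k)
  have diag (k : Fin 4) : Pi.single (k, k) (1 : ℂ) ∈ M := by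
    have h₂ := (adj (k + 1)).1
    rw [show k + 1 + 1 = k + 2 by grind] at h₂
    convert M.smul_mem (2 : ℂ)⁻¹ (M.add_mem (M.sub_mem (adj k).1 h₂) (opp k).1) using 1
    module
  obtain ⟨i, j⟩ := p
  obtain ⟨δ, rfl⟩ : ∃ δ, j = i + δ := ⟨j - i, by abel⟩
  fin_cases δ
  · simpa using diag i
  · exact (adj i).2.1
  · exact (opp i).2.1
  · simpa [show i + 3 + 1 = i by grind] using (adj (i + 3)).2.2

theorem WI_optimized_spanning_property (θ : ℝ) (hθ : θ ∈ Set.Ioo 0 π) :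
    Submodule.span ℂ
      {v : Fin 4 × Fin 4 → ℂ |
        ∃ x y : Fin 4 → ℂ, v = tensorVec x y ∧
          expec (WI θ - (2 : ℂ) • Pmat) (tensorVec x y) = 0} = ⊤ := by
  have hcos : Real.cos π < Real.cos θ := cos_lt_cos_of_nonneg_of_le_pi hθ.1.le le_rfl hθ.2
  have hq : 0 < (1 + Real.cos θ) / Real.sin θ :=
    div_pos (by linarith [Real.cos_pi]) (sin_pos_of_pos_of_lt_pi hθ.1 hθ.2)
  have hr0 : √((1 + Real.cos θ) / Real.sin θ) ≠ 0 := (sqrt_pos.2 hq).ne'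
  rw [eq_top_iff, ← (Pi.basisFun ℂ (Fin 4 × Fin 4)).span_eq, Submodule.span_le]
  rintro _ ⟨p, rfl⟩
  rw [Pi.basisFun_apply]
  refine single_mem_of_forall_unit (ofReal_ne_zero.2 hr0) (fun k c hc => ?_) (fun k c hc => ?_) p
  · exact Submodule.subset_span
      ⟨_, _, rfl, expec_WI_sub_Pmat_adjacent_eq_zero hr0 (sq_sqrt hq.le) k hc⟩
  · exact Submodule.subset_span ⟨_, _, rfl, expec_WI_sub_Pmat_opposite_eq_zero θ k hc⟩
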